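/- arXiv:2203.11603 — 2 statements merged into one kernel-verified Lean document; each statement's English description precedes it below -/
import Mathlib

section
/- Let x^t ∈ {0,1}^n, let Q^t ∈ ℝ and U ∈ ℝ with Q^t ≤ U. Define the cut function c(x) = (Q^t − U)·(∑_{i: x^t_i=1} x_i − ∑_{i: x^t_i=0} x_i) + U − (Q^t − U)·(|{i : x^t_i = 1}| − 1) for x ∈ {0,1}^n. Then c(x^t) = Q^t, and for every binary x ≠ x^t one has c(x) ≥ U. -/
/-!
For binary vectors `x` and `xᵗ`, the bracket `∑_{xᵗᵢ = 1} xᵢ - ∑_{xᵗᵢ = 0} xᵢ` equals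
`|{i : xᵗᵢ = 1}|` minus the Hamming distance `d(x, xᵗ)`, so the cut reads
`c(x) = U + (Qᵗ - U)(1 - d(x, xᵗ))`. It is `Qᵗ` at `d = 0`, and for `d ≥ 1` both factors of the
correction term are nonpositive.
-/

open Finset

lemma binary_signed_eq_indicator_sub_ne {a b : ℤ} (ha : a = 0 ∨ a = 1) (hb : b = 0 ∨ b = 1) :
    ((if b = 1 then a else 0) - if b = 0 then a else 0) =
      (if b = 1 then 1 else 0) - if a ≠ b then 1 else 0 := by
  rcases ha with rfl | rfl <;> rcases hb with rfl | rfl <;> simp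

lemma sum_filter_eq_one_sub_sum_filter_eq_zero {ι : Type*} [Fintype ι] {x y : ι → ℤ}
    (hx : ∀ i, x i = 0 ∨ x i = 1) (hy : ∀ i, y i = 0 ∨ y i = 1) :
    ∑ i ∈ univ.filter (fun i => y i = 1), x i - ∑ i ∈ univ.filter (fun i => y i = 0), x i =
      #(univ.filter fun i => y i = 1) - hammingDist x y := by
  simp only [sum_filter, hammingDist, natCast_card_filter, ← sum_sub_distrib]
  exact sum_congr rfl fun i _ => binary_signed_eq_indicator_sub_ne (hx i) (hy i)

theorem stmt_2 (n : ℕ) (xt : Fin n → ℤ) (hxt : ∀ i, xt i = 0 ∨ xt i = 1)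
    (Qt U : ℝ) (hQU : Qt ≤ U)
    (c : (Fin n → ℤ) → ℝ)
    (hc : ∀ x, c x =
      (Qt - U) * (((∑ i ∈ Finset.univ.filter (fun i => xt i = 1), x i) -
        (∑ i ∈ Finset.univ.filter (fun i => xt i = 0), x i) : ℤ) : ℝ)
      + U - (Qt - U) * (((Finset.univ.filter (fun i => xt i = 1)).card : ℝ) - 1)) :
    c xt = Qt ∧
    ∀ x : Fin n → ℤ, (∀ i, x i = 0 ∨ x i = 1) → x ≠ xt → c x ≥ U := by
  have hc_dist : ∀ x : Fin n → ℤ, (∀ i, x i = 0 ∨ x i = 1) →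
      c x = U + (Qt - U) * (1 - hammingDist x xt) := by
    intro x hx
    rw [hc, sum_filter_eq_one_sub_sum_filter_eq_zero hx hxt]
    push_cast
    ring
  refine ⟨by simp [hc_dist xt hxt], fun x hx hne => ?_⟩
  have hdist : (1 : ℝ) ≤ hammingDist x xt := by exact_mod_cast hammingDist_pos.mpr hne
  rw [hc_dist x hx, ge_iff_le, le_add_iff_nonneg_right]
  exact mul_nonneg_of_nonpos_of_nonpos (by linarith) (by linarith)
end

section
/- Fix a zone i with a set V_i of vehicles available and an ordered list of requests r_1 < … < r_m all originating at i, all acceptable (i.e., their fee threshold is met). Under the first-come-first-served constraints — each vehicle serves at most one request, each request served by at most one vehicle, and a vehicle available at i must serve request r_k unless it has already been assigned to some request r_j with j < k or r_k is served by another vehicle — the number of served requests equals min(m, |V_i|), and the set of served requests is exactly {r_1, …, r_{min(m,|V_i|)}}. -/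
/-!
If request `r` is served by `v`, every earlier request `r'` is served too: otherwise the FCFS
constraint at `r'` would make `v` serve a request before `r'`, and by injectivity that request is
`r`. So the served requests form an initial segment of length `k`. Injectivity gives
`k ≤ |V|`, and if `k < m` the first unserved request forces every vehicle onto one of the `k`
earlier ones, so `|V| ≤ k`.
-/

open Finset

section

variable {ι β : Type*}

/-- `a r = some v` means that request `r` is served by vehicle `v`, `a r = none` that it is
not served. -/
structure IsFCFSAssignment [LT ι] (V : Finset β) (a : ι → Option β) : Prop where
  mem : ∀ r v, a r = some v → v ∈ V
  inj : ∀ r r' v, a r = some v → a r' = some v → r = r'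
  fcfs : ∀ r, a r = none → ∀ v ∈ V, ∃ r', r' < r ∧ a r' = some v

theorem Fin.eq_filter_lt_card_of_isLowerSet {m : ℕ} {S : Finset (Fin m)}
    (hS : IsLowerSet (S : Set (Fin m))) :
    S = univ.filter (fun r : Fin m => (r : ℕ) < S.card) := by
  rcases hS.eq_univ_or_Iio with h | ⟨k, h⟩
  · rw [coe_eq_univ] at h
    subst h
    ext r
    simp
  · rw [← coe_Iio, coe_inj] at h
    subst h
    ext r
    simp

namespace IsFCFSAssignment

variable {V : Finset β} {a : ι → Option β}

theorem isSome_of_le [Preorder ι] (ha : IsFCFSAssignment V a) {r r' : ι} (hle : r' ≤ r)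
    (hr : (a r).isSome) : (a r').isSome := by
  by_contra hr'
  obtain ⟨v, hv⟩ := Option.isSome_iff_exists.mp hr
  obtain ⟨r'', hlt, hr''⟩ := ha.fcfs r' (Option.not_isSome_iff_eq_none.mp hr') v (ha.mem r v hv)
  obtain rfl := ha.inj r'' r v hr'' hv
  exact (hlt.trans_le hle).false

theorem isLowerSet_served [Preorder ι] [Fintype ι] (ha : IsFCFSAssignment V a) :
    IsLowerSet ((univ.filter fun r => (a r).isSome : Finset ι) : Set ι) := by
  intro r r' hle hr
  simp only [coe_filter, mem_univ, true_and, Set.mem_ofPred_eq] at hr ⊢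
  exact ha.isSome_of_le hle hr

theorem card_served_le [LT ι] [Fintype ι] (ha : IsFCFSAssignment V a) :
    (univ.filter fun r => (a r).isSome).card ≤ V.card := by
  classical
  set S := univ.filter fun r => (a r).isSome
  have hinjOn : Set.InjOn a S := by
    intro r hr r' _ hrr'
    obtain ⟨v, hv⟩ := Option.isSome_iff_exists.mp (mem_filter.mp hr).2
    exact ha.inj r r' v hv (hrr' ▸ hv)
  have himage : S.image a ⊆ V.map Function.Embedding.some := by
    intro o ho
    obtain ⟨r, hr, rfl⟩ := mem_image.mp ho
    obtain ⟨v, hv⟩ := Option.isSome_iff_exists.mp (mem_filter.mp hr).2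
    rw [hv]
    exact mem_map_of_mem _ (ha.mem r v hv)
  calc S.card = (S.image a).card := (card_image_of_injOn hinjOn).symm
    _ ≤ (V.map Function.Embedding.some).card := card_le_card himage
    _ = V.card := card_map _

theorem card_le_of_eq_none [Preorder ι] [LocallyFiniteOrderBot ι] (ha : IsFCFSAssignment V a)
    {r : ι} (hr : a r = none) : V.card ≤ (Iio r).card := by
  classical
  have hsub : V.map Function.Embedding.some ⊆ (Iio r).image a := by
    intro o ho
    obtain ⟨v, hv, rfl⟩ := mem_map.mp ho
    obtain ⟨r', hlt, hr'⟩ := ha.fcfs r hr v hv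
    exact mem_image.mpr ⟨r', mem_Iio.mpr hlt, hr'⟩
  calc V.card = (V.map Function.Embedding.some).card := (card_map _).symm
    _ ≤ ((Iio r).image a).card := card_le_card hsub
    _ ≤ (Iio r).card := card_image_le

end IsFCFSAssignment

end

theorem stmt_7_general {β : Type*} (Vi : Finset β)
    (m : ℕ) (a : Fin m → Option β)
    (hmem : ∀ r v, a r = some v → v ∈ Vi)
    (hinj : ∀ r r' v, a r = some v → a r' = some v → r = r')
    (hfcfs : ∀ r, a r = none → ∀ v ∈ Vi, ∃ r', r' < r ∧ a r' = some v) :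
    (Finset.univ.filter (fun r => (a r).isSome)).card = min m Vi.card ∧
    Finset.univ.filter (fun r => (a r).isSome) =
      Finset.univ.filter (fun r : Fin m => (r : ℕ) < min m Vi.card) := by
  have ha : IsFCFSAssignment Vi a := ⟨hmem, hinj, hfcfs⟩
  set S := univ.filter fun r => (a r).isSome
  have hS : S = univ.filter (fun r : Fin m => (r : ℕ) < S.card) :=
    Fin.eq_filter_lt_card_of_isLowerSet ha.isLowerSet_served
  have hcard : S.card = min m Vi.card := by
    refine le_antisymm (le_min (by simpa using card_le_univ S) ha.card_served_le) ?_
    rcases lt_or_ge S.card m with hlt | hge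
    · have hnone : a ⟨S.card, hlt⟩ = none := by
        have hnot : (⟨S.card, hlt⟩ : Fin m) ∉ S := fun hmem' => by
          simpa using (Finset.ext_iff.mp hS _).mp hmem'
        simpa [S] using hnot
      exact min_le_of_right_le (by simpa using ha.card_le_of_eq_none hnone)
    · exact (min_le_left _ _).trans hge
  exact ⟨hcard, hcard ▸ hS⟩

theorem stmt_7 {β : Type*} [DecidableEq β] (Vi : Finset β)
    (m : ℕ) (a : Fin m → Option β)
    (hmem : ∀ r v, a r = some v → v ∈ Vi)
    (hinj : ∀ r r' v, a r = some v → a r' = some v → r = r')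
    (hfcfs : ∀ r, a r = none → ∀ v ∈ Vi, ∃ r', r' < r ∧ a r' = some v) :
    (Finset.univ.filter (fun r => (a r).isSome)).card = min m Vi.card ∧
    Finset.univ.filter (fun r => (a r).isSome) =
      Finset.univ.filter (fun r : Fin m => (r : ℕ) < min m Vi.card) :=
  stmt_7_general Vi m a hmem hinj hfcfs
end
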